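/- Let ω_opt(r) = (2r² + 20r + 48)/(2r² + 21r + 50) for r ≥ 0. Then ω_opt is strictly decreasing on [0, 2√2 − 2] and strictly increasing on [2√2 − 2, ∞); consequently, for every r ≥ 0, ω_opt(2√2 − 2) ≤ ω_opt(r) < 1. -/
import Mathlib


noncomputable def ωopt (r : ℝ) : ℝ := (2*r^2 + 20*r + 48) / (2*r^2 + 21*r + 50)

lemma Dpos {r : ℝ} (hr : 0 ≤ r) : 0 < 2*r^2 + 21*r + 50 := by nlinarith

lemma diff_eq {a b : ℝ} (ha : 0 ≤ a) (hb : 0 ≤ b) :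
    ωopt a - ωopt b =
      2*(a-b)*(a*b+2*a+2*b-4) / ((2*a^2+21*a+50)*(2*b^2+21*b+50)) := by
  have h1 := Dpos ha
  have h2 := Dpos hb
  unfold ωopt
  field_simp
  ring

theorem omega_opt_monotonicity_and_bounds :
    StrictAntiOn ωopt (Set.Icc (0 : ℝ) (2 * Real.sqrt 2 - 2)) ∧
    StrictMonoOn ωopt (Set.Ici (2 * Real.sqrt 2 - 2)) ∧
    ∀ r : ℝ, 0 ≤ r → ωopt (2 * Real.sqrt 2 - 2) ≤ ωopt r ∧ ωopt r < 1 := by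
  set c : ℝ := 2 * Real.sqrt 2 - 2 with hc
  have hs2 : Real.sqrt 2 ^ 2 = 2 := Real.sq_sqrt (by norm_num)
  have hs2lb : (1 : ℝ) < Real.sqrt 2 := by
    nlinarith [Real.sqrt_nonneg 2, hs2]
  have hc0 : 0 < c := by rw [hc]; linarith
  have hcsq : c^2 + 4*c - 4 = 0 := by rw [hc]; nlinarith [hs2]
  refine ⟨?_, ?_, ?_⟩
  · intro a ha b hb hab
    obtain ⟨ha0, hac⟩ := ha
    obtain ⟨hb0, hbc⟩ := hb
    have key : 0 < ωopt a - ωopt b := by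
      rw [diff_eq ha0 hb0]
      apply div_pos
      · have h1 : 0 < b - a := by linarith
        have h2 : 0 < 4 - (a*b + 2*a + 2*b) := by
          nlinarith [mul_nonneg ha0 (sub_nonneg.2 hbc), hcsq]
        nlinarith [mul_pos h1 h2]
      · exact mul_pos (Dpos ha0) (Dpos hb0)
    linarith
  · intro a ha b hb hab
    have ha0 : 0 ≤ a := le_trans hc0.le ha
    have hb0 : 0 ≤ b := le_trans hc0.le (Set.mem_Ici.mp hb)
    have key : 0 < ωopt b - ωopt a := by
      rw [diff_eq hb0 ha0]
      apply div_pos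
      · have h1 : 0 < b - a := by linarith
        have hca : c ≤ a := ha
        have hcb : c < b := lt_of_le_of_lt hca hab
        have h2 : 0 < a*b + 2*a + 2*b - 4 := by
          nlinarith [mul_nonneg (sub_nonneg.2 hca) (sub_nonneg.2 hcb.le), hcsq]
        nlinarith [mul_pos h1 h2]
      · exact mul_pos (Dpos hb0) (Dpos ha0)
    linarith
  · intro r hr
    constructor
    · have key : ωopt c - ωopt r ≤ 0 := by
        rw [diff_eq hc0.le hr]
        apply div_nonpos_of_nonpos_of_nonneg
        · nlinarith [sq_nonneg (c - r), hcsq, mul_nonneg (by linarith : (0:ℝ) ≤ c + 2) (sq_nonneg (c - r))]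
        · exact le_of_lt (mul_pos (Dpos hc0.le) (Dpos hr))
      linarith
    · unfold ωopt
      rw [div_lt_one (Dpos hr)]
      linarith
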